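/- (LaSalle invariance principle.) Let E be a finite-dimensional real normed vector space and let φ : ℝ × E → E be a continuous flow (φ(0, x) = x and φ(s, φ(t, x)) = φ(s + t, x)). Let Ω ⊆ E be a compact set that is positively invariant, i.e. φ(t, x) ∈ Ω for all x ∈ Ω and t ≥ 0. Let F : E → ℝ be continuous with F ≥ 0 on Ω, and assume that for every x ∈ Ω the function t ↦ F(φ(t, x)) is nonincreasing on [0, ∞). Then for every x ∈ Ω the ω-limit set ω(x) := ∩_{T≥0} closure{φ(t, x) : t ≥ T} is nonempty, compact, contained in Ω, invariant under the flow (φ(t, y) ∈ ω(x) for all y ∈ ω(x) and t ∈ ℝ), F is constant on each forward orbit inside ω(x) (F(φ(t, y)) = F(y) for all y ∈ ω(x), t ≥ 0), and the distance from φ(t, x) to ω(x) tends to 0 as t → +∞. -/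

import Mathlib

/-!
The ω-limit set of `x` is Mathlib's `ω⁺ φ {x}`, the set of cluster points of the trajectory
`t ↦ φ t x` at `+∞`. Since the trajectory stays in the compact set `Ω`, this set is nonempty and
compact, and the trajectory converges to it in the sense of `𝓝ˢ`, which in a metric space means
that the distance to it tends to `0`. The group law makes each `φ t` commute with the time shift,
so `φ t` maps cluster points to cluster points. Finally `F (φ t x)` is nonincreasing and bounded
below on the compact set `Ω`, hence converges to some `c`; by continuity `F = c` on the ω-limit set,
which is invariant, so `F` is constant on orbits inside it.
-/

open Filter Topology

/-- The ω-limit set of the point `x` under the flow `φ`: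
`ω(x) = ∩_{T ≥ 0} closure {φ(t, x) : t ≥ T}`. -/
def omegaLimitSet {E : Type*} [TopologicalSpace E] (φ : ℝ → E → E) (x : E) : Set E :=
  ⋂ T ∈ Set.Ici (0 : ℝ), closure ((fun t => φ t x) '' Set.Ici T)

open Set omegaLimit

theorem AntitoneOn.exists_tendsto_atTop_of_bddBelow {α β : Type*} [LinearOrder α]
    [ConditionallyCompleteLinearOrder β] [TopologicalSpace β] [OrderTopology β]
    {f : α → β} {a : α} (hf : AntitoneOn f (Ici a)) (hb : BddBelow (f '' Ici a)) :
    ∃ c, Tendsto f atTop (𝓝 c) := by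
  have hg : Antitone fun t => f (max t a) := fun s t hst =>
    hf (le_max_right s a) (le_max_right t a) (max_le_max_right a hst)
  refine ⟨_, (tendsto_atTop_ciInf hg (hb.mono ?_)).congr' ?_⟩
  · rintro _ ⟨t, rfl⟩
    exact ⟨_, le_max_right t a, rfl⟩
  · filter_upwards [eventually_ge_atTop a] with t ht
    rw [max_eq_left ht]

theorem Metric.tendsto_infDist_of_tendsto_nhdsSet {ι X : Type*} [PseudoMetricSpace X]
    {l : Filter ι} {u : ι → X} {K : Set X} (hK : IsCompact K) (hne : K.Nonempty)
    (h : Tendsto u l (𝓝ˢ K)) : Tendsto (fun i => Metric.infDist (u i) K) l (𝓝 0) :=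
  tendsto_order.2 ⟨fun _ ha => Eventually.of_forall fun _ => ha.trans_le Metric.infDist_nonneg,
    (Metric.tendsto_nhdsSet hK hne).1 h⟩

section omegaLimit

variable {τ α β : Type*} [TopologicalSpace β] {f : Filter τ} {ϕ : τ → α → β}

theorem closure_image2_singleton_subset {x : α} {c : Set β} (hc : IsClosed c) {u : Set τ}
    (hx : ∀ t ∈ u, ϕ t x ∈ c) : closure (image2 ϕ u {x}) ⊆ c :=
  closure_minimal (image2_subset_iff.2 fun t ht _ hy => hy ▸ hx t ht) hc

theorem tendsto_nhdsSet_omegaLimit_singleton [T2Space β] {x : α} {c : Set β} (hc : IsCompact c)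
    (hx : ∀ᶠ t in f, ϕ t x ∈ c) : Tendsto (fun t => ϕ t x) f (𝓝ˢ (ω f ϕ {x})) := by
  refine (hasBasis_nhdsSet _).tendsto_right_iff.2 fun U ⟨hU, hsub⟩ => ?_
  have hmaps : ∀ᶠ t in f, MapsTo (ϕ t) {x} c := hx.mono fun t ht _ hy => hy ▸ ht
  exact (eventually_mapsTo_of_isCompact_absorbing_of_isOpen_of_omegaLimit_subset
    f ϕ {x} hc hmaps hU hsub).mono fun t ht => ht rfl

theorem eq_of_mem_omegaLimit_singleton_of_tendsto {γ : Type*} [TopologicalSpace γ] [T2Space γ]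
    {g : β → γ} (hg : Continuous g) {x : α} {c : γ} (h : Tendsto (fun t => g (ϕ t x)) f (𝓝 c))
    {y : β} (hy : y ∈ ω f ϕ {x}) : g y = c := by
  rw [mem_omegaLimit_singleton_iff_mapClusterPt] at hy
  exact eq_of_nhds_neBot ((hy.continuousAt_comp hg.continuousAt).clusterPt.mono h)

end omegaLimit

theorem mapsTo_omegaLimit_of_map_add {τ α : Type*} [Add τ] [TopologicalSpace α] {f : Filter τ}
    {ϕ : τ → α → α} (hadd : ∀ s t x, ϕ s (ϕ t x) = ϕ (s + t) x) {t : τ} (hϕt : Continuous (ϕ t))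
    (hf : Tendsto (t + ·) f f) (s : Set α) : MapsTo (ϕ t) (ω f ϕ s) (ω f ϕ s) :=
  (mapsTo_omegaLimit s (mapsTo_id s) (fun t' x => hadd t t' x) hϕt).mono_right
    (omegaLimit_subset_of_tendsto ϕ s hf)

theorem omegaLimitSet_eq_omegaLimit {E : Type*} [TopologicalSpace E] (φ : ℝ → E → E) (x : E) :
    omegaLimitSet φ x = ω⁺ φ {x} := by
  ext y
  rw [mem_omegaLimit_singleton_iff_mapClusterPt, MapClusterPt,
    ((atTop_basis' 0).map _).clusterPt_iff_forall_mem_closure]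
  simp only [omegaLimitSet, mem_iInter₂, mem_Ici]

theorem lasalle_invariance_principle
    {E : Type*} [NormedAddCommGroup E]
    (φ : ℝ → E → E)
    (hφcont : Continuous fun q : ℝ × E => φ q.1 q.2)
    (hφadd : ∀ s t : ℝ, ∀ x : E, φ s (φ t x) = φ (s + t) x)
    (Ω : Set E) (hΩcompact : IsCompact Ω)
    (hΩinv : ∀ x ∈ Ω, ∀ t : ℝ, 0 ≤ t → φ t x ∈ Ω)
    (F : E → ℝ) (hFcont : Continuous F)
    (hFdecr : ∀ x ∈ Ω, ∀ s t : ℝ, 0 ≤ s → s ≤ t → F (φ t x) ≤ F (φ s x))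
    (x : E) (hx : x ∈ Ω) :
    (omegaLimitSet φ x).Nonempty ∧
    IsCompact (omegaLimitSet φ x) ∧
    omegaLimitSet φ x ⊆ Ω ∧
    (∀ y ∈ omegaLimitSet φ x, ∀ t : ℝ, φ t y ∈ omegaLimitSet φ x) ∧
    (∀ y ∈ omegaLimitSet φ x, ∀ t : ℝ, 0 ≤ t → F (φ t y) = F y) ∧
    Tendsto (fun t : ℝ => Metric.infDist (φ t x) (omegaLimitSet φ x)) atTop (𝓝 0) := by
  rw [omegaLimitSet_eq_omegaLimit]
  have habs : closure (image2 φ (Ici 0) {x}) ⊆ Ω :=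
    closure_image2_singleton_subset hΩcompact.isClosed (hΩinv x hx)
  have hsub : ω⁺ φ {x} ⊆ Ω :=
    (omegaLimit_subset_closure_image2 _ _ _ (Ici_mem_atTop 0)).trans habs
  have hne : (ω⁺ φ {x}).Nonempty :=
    nonempty_omegaLimit_of_isCompact_absorbing _ _ _ hΩcompact ⟨Ici 0, Ici_mem_atTop 0, habs⟩
      (singleton_nonempty x)
  have hcpt : IsCompact (ω⁺ φ {x}) :=
    hΩcompact.of_isClosed_subset (isClosed_omegaLimit _ _ _) hsub
  have hinv : ∀ y ∈ ω⁺ φ {x}, ∀ t, φ t y ∈ ω⁺ φ {x} := fun y hy t =>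
    mapsTo_omegaLimit_of_map_add hφadd (hφcont.comp (continuous_const.prodMk continuous_id))
      (tendsto_atTop_add_const_left _ t tendsto_id) {x} hy
  obtain ⟨c, hc⟩ : ∃ c, Tendsto (fun t => F (φ t x)) atTop (𝓝 c) :=
    AntitoneOn.exists_tendsto_atTop_of_bddBelow (fun s hs t _ hst => hFdecr x hx s t hs hst)
      ((hΩcompact.bddBelow_image hFcont.continuousOn).mono
        (by rintro _ ⟨t, ht, rfl⟩; exact mem_image_of_mem F (hΩinv x hx t ht)))
  have hFc : ∀ y ∈ ω⁺ φ {x}, F y = c := fun y hy =>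
    eq_of_mem_omegaLimit_singleton_of_tendsto hFcont hc hy
  refine ⟨hne, hcpt, hsub, hinv, fun y hy t _ => by rw [hFc y hy, hFc _ (hinv y hy t)], ?_⟩
  exact Metric.tendsto_infDist_of_tendsto_nhdsSet hcpt hne
    (tendsto_nhdsSet_omegaLimit_singleton hΩcompact
      (eventually_ge_atTop 0 |>.mono fun t ht => hΩinv x hx t ht))
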